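/- arXiv:0705.4220 — 3 statements merged into one kernel-verified Lean document; each statement's English description precedes it below -/
import Mathlib

section
/- Let A be an alphabet, t an extra letter, and let N be the kernel of the homomorphism F(A ∪ {t}) → ℤ sending t to 1 and each a ∈ A to 0. Then N is a free group with free basis the set {tᵏ a t⁻ᵏ : a ∈ A, k ∈ ℤ}. -/
/-!
Sending `a ↦ (a, 0)` and `t ↦ 1` identifies `F(A ⊔ {t})` with the semidirect product
`F(A × ℤ) ⋊ ℤ`, where `ℤ` acts by shifting the second coordinate; the inverse sends the generator
`(a, k)` to `tᵏ a t⁻ᵏ`. Under this identification the exponent sum of `t` is the projection onto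
`ℤ`, whose kernel is the free factor `F(A × ℤ)`.
-/

/-- The exponent-sum-of-`t` homomorphism `F(A ∪ {t}) → ℤ`. -/
noncomputable def expSum (A : Type*) : FreeGroup (A ⊕ Unit) →* Multiplicative ℤ :=
  FreeGroup.lift (Sum.elim (fun _ => (1 : Multiplicative ℤ)) (fun _ => Multiplicative.ofAdd 1))

/-- The stable letter `t`. -/
noncomputable def tGen (A : Type*) : FreeGroup (A ⊕ Unit) := FreeGroup.of (Sum.inr ())

lemma conj_mem_ker (A : Type*) (a : A) (k : ℤ) :
    tGen A ^ k * FreeGroup.of (Sum.inl a) * tGen A ^ (-k) ∈ (expSum A).ker := by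
  simp [MonoidHom.mem_ker, expSum, tGen]

open SemidirectProduct

section

variable {N G H : Type*} [Group N] [Group G] [Group H] {φ : H →* MulAut N}

theorem SemidirectProduct.injective_symm_comp_inl (e : G ≃* N ⋊[φ] H) :
    Function.Injective (e.symm.toMonoidHom.comp inl) :=
  e.symm.injective.comp inl_injective

theorem SemidirectProduct.range_symm_comp_inl (e : G ≃* N ⋊[φ] H) :
    (e.symm.toMonoidHom.comp inl).range = (rightHom.comp e.toMonoidHom).ker := by
  rw [MonoidHom.range_comp, range_inl_eq_ker_rightHom, ← MonoidHom.comap_ker,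
    Subgroup.map_equiv_eq_comap_symm', e.symm_symm]

end

theorem MonoidHom.bijective_of_subtype_comp {G H : Type*} [Group G] [Group H] {K : Subgroup H}
    {f : G →* K} {g : G →* H} (hfg : K.subtype.comp f = g) (hg : Function.Injective g)
    (hK : g.range = K) : Function.Bijective f := by
  subst hfg
  refine ⟨.of_comp (f := K.subtype) hg, fun x => ?_⟩
  obtain ⟨y, hy⟩ : (x : H) ∈ (K.subtype.comp f).range := by rw [hK]; exact x.2
  exact ⟨y, Subtype.ext hy⟩

namespace KerExpSum

variable (A : Type*)

noncomputable def shiftAut : Multiplicative ℤ →* MulAut (FreeGroup (A × ℤ)) where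
  toFun n := FreeGroup.freeGroupCongr ((Equiv.refl A).prodCongr (Equiv.addRight n.toAdd))
  map_one' := by
    ext x
    simp
  map_mul' m n := by
    rw [MulAut.mul_def, FreeGroup.freeGroupCongr_trans]
    congr 1
    ext ⟨a, j⟩
    · simp
    · simp; abel

variable {A}

@[simp]
theorem shiftAut_of (n : Multiplicative ℤ) (a : A) (j : ℤ) :
    shiftAut A n (FreeGroup.of (a, j)) = FreeGroup.of (a, j + n.toAdd) := by
  simp [shiftAut]

variable (A)

noncomputable def conjBasis : FreeGroup (A × ℤ) →* FreeGroup (A ⊕ Unit) :=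
  FreeGroup.lift fun p => tGen A ^ p.2 * FreeGroup.of (Sum.inl p.1) * tGen A ^ (-p.2)

theorem conjBasis_comp_shiftAut (n : Multiplicative ℤ) :
    (conjBasis A).comp (shiftAut A n).toMonoidHom =
      (MulAut.conj (tGen A ^ n.toAdd)).toMonoidHom.comp (conjBasis A) := by
  ext ⟨a, j⟩
  simp only [MonoidHom.comp_apply, MulEquiv.coe_toMonoidHom, shiftAut_of, MulAut.conj_apply,
    conjBasis, FreeGroup.lift_apply_of, neg_add, zpow_add]
  group

noncomputable def toSemidirect :
    FreeGroup (A ⊕ Unit) →* FreeGroup (A × ℤ) ⋊[shiftAut A] Multiplicative ℤ :=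
  FreeGroup.lift <| Sum.elim (fun a => inl (FreeGroup.of (a, 0))) fun _ => inr (.ofAdd 1)

noncomputable def ofSemidirect :
    FreeGroup (A × ℤ) ⋊[shiftAut A] Multiplicative ℤ →* FreeGroup (A ⊕ Unit) :=
  lift (conjBasis A) (zpowersHom _ (tGen A)) (conjBasis_comp_shiftAut A)

variable {A} in
theorem ofSemidirect_inl (n : FreeGroup (A × ℤ)) : ofSemidirect A (inl n) = conjBasis A n :=
  lift_inl ..

variable {A} in
theorem ofSemidirect_inr (k : Multiplicative ℤ) : ofSemidirect A (inr k) = tGen A ^ k.toAdd :=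
  lift_inr ..

theorem ofSemidirect_comp_toSemidirect : (ofSemidirect A).comp (toSemidirect A) = .id _ := by
  ext (a | ⟨⟩) <;> simp [ofSemidirect_inl, ofSemidirect_inr, toSemidirect, conjBasis, tGen]

variable {A} in
theorem toSemidirect_of_inl (a : A) : toSemidirect A (.of (.inl a)) = inl (.of (a, 0)) :=
  FreeGroup.lift_apply_of ..

variable {A} in
theorem toSemidirect_tGen_zpow (k : ℤ) : toSemidirect A (tGen A ^ k) = inr (.ofAdd k) := by
  rw [map_zpow, toSemidirect, tGen, FreeGroup.lift_apply_of, Sum.elim_inr, ← map_zpow,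
    ← ofAdd_zsmul, smul_eq_mul, mul_one]

theorem toSemidirect_comp_conjBasis : (toSemidirect A).comp (conjBasis A) = inl := by
  ext1 ⟨a, k⟩
  simp only [MonoidHom.comp_apply, conjBasis, FreeGroup.lift_apply_of, map_mul,
    toSemidirect_tGen_zpow, toSemidirect_of_inl]
  rw [ofAdd_neg, ← inl_aut, shiftAut_of, zero_add, toAdd_ofAdd]

theorem toSemidirect_comp_ofSemidirect : (toSemidirect A).comp (ofSemidirect A) = .id _ := by
  refine hom_ext (MonoidHom.ext fun n => ?_) (MonoidHom.ext fun k => ?_)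
  · rw [MonoidHom.comp_apply, MonoidHom.comp_apply, ofSemidirect_inl, ← MonoidHom.comp_apply,
      toSemidirect_comp_conjBasis]
    rfl
  · simp [ofSemidirect_inr, toSemidirect_tGen_zpow]

noncomputable def semidirectEquiv :
    FreeGroup (A ⊕ Unit) ≃* FreeGroup (A × ℤ) ⋊[shiftAut A] Multiplicative ℤ :=
  MonoidHom.toMulEquiv _ _ (ofSemidirect_comp_toSemidirect A) (toSemidirect_comp_ofSemidirect A)

theorem rightHom_comp_toSemidirect : rightHom.comp (toSemidirect A) = expSum A := by
  ext (a | ⟨⟩) <;> simp [toSemidirect, expSum]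

end KerExpSum

open KerExpSum in
/-- The kernel of the exponent-sum map is free with basis `{tᵏ a t⁻ᵏ : a ∈ A, k ∈ ℤ}`. -/
theorem ker_expSum_free (A : Type*) :
    Function.Bijective
      (FreeGroup.lift (fun p : A × ℤ =>
        (⟨tGen A ^ p.2 * FreeGroup.of (Sum.inl p.1) * tGen A ^ (-p.2),
          conj_mem_ker A p.1 p.2⟩ : (expSum A).ker)) :
        FreeGroup (A × ℤ) →* (expSum A).ker) := by
  refine MonoidHom.bijective_of_subtype_comp (g := (semidirectEquiv A).symm.toMonoidHom.comp inl)
    ?_ (injective_symm_comp_inl _) ?_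
  · ext1 p
    simp [semidirectEquiv, ofSemidirect_inl, conjBasis]
  · rw [range_symm_comp_inl]
    exact congrArg MonoidHom.ker (rightHom_comp_toSemidirect A)
end

section
/- Let A be a finite alphabet and R ⊆ F(A) contain the commutator [e,f] as a consequence: suppose e, f, g ∈ A with relators efg and e⁻¹f⁻¹g⁻¹ in R. Then for every n ≥ 0 the word eⁿ fⁿ gⁿ admits a null-expression over R of area at most 3n², i.e., Area_R(eⁿfⁿgⁿ) ≤ 3n². -/
/-!
The relators `efg` and `e⁻¹f⁻¹g⁻¹` together make `f` commute with `e⁻¹` at area 2, so moving `fᵏ`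
past a single letter `e` costs `2k`. Doing this for `k = 0, …, n-1` turns `eⁿfⁿ` into `(ef)ⁿ` at
area `n(n-1)`; the `n` remaining letters `g` are then cancelled against the
blocks `ef` by one relator `efg` each, for a total of `n² ≤ 3n²`.
-/

def HasNullExpr {A : Type*} (S : Set (FreeGroup A)) (m : ℕ) (w : FreeGroup A) : Prop :=
  ∃ x r : Fin m → FreeGroup A,
    (∀ i, r i ∈ S ∪ (fun g => g⁻¹) '' S) ∧
    w = (List.ofFn (fun i => x i * r i * (x i)⁻¹)).prod

open scoped commutatorElement

namespace HasNullExpr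

variable {A : Type*} {S : Set (FreeGroup A)} {a b m : ℕ} {u v w : FreeGroup A}

theorem one : HasNullExpr S 0 1 :=
  ⟨Fin.elim0, Fin.elim0, fun i => i.elim0, rfl⟩

theorem of_mem {r : FreeGroup A} (hr : r ∈ S) : HasNullExpr S 1 r :=
  ⟨fun _ => 1, fun _ => r, fun _ => Or.inl hr, by simp⟩

theorem of_eq (hu : HasNullExpr S m u) (h : u = v) : HasNullExpr S m v :=
  h ▸ hu

theorem mul (hu : HasNullExpr S a u) (hv : HasNullExpr S b v) :
    HasNullExpr S (a + b) (u * v) := by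
  obtain ⟨x, r, hr, rfl⟩ := hu
  obtain ⟨y, s, hs, rfl⟩ := hv
  refine ⟨Fin.append x y, Fin.append r s,
    Fin.addCases (by simpa using hr) (by simpa using hs), ?_⟩
  rw [List.ofFn_add]
  simp [Fin.append_right]

theorem conj (c : FreeGroup A) (hw : HasNullExpr S m w) :
    HasNullExpr S m (c * w * c⁻¹) := by
  obtain ⟨x, r, hr, rfl⟩ := hw
  refine ⟨fun i => c * x i, r, hr, ?_⟩
  rw [← MulAut.conj_apply, map_list_prod, List.map_ofFn]
  congr 2
  ext i
  simp only [Function.comp_apply, MulAut.conj_apply]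
  group

theorem pow_mul_pow (h : HasNullExpr S m (u * v)) (n : ℕ) :
    HasNullExpr S (n * m) (u ^ n * v ^ n) := by
  induction n with
  | zero => simpa using one
  | succ n ih =>
    rw [add_one_mul, add_comm]
    refine ((h.conj (u ^ n)).mul ih).of_eq ?_
    rw [pow_succ', pow_succ]
    group

theorem commutatorElement_pow_left {x y : FreeGroup A} (h : HasNullExpr S m ⁅x, y⁆) (n : ℕ) :
    HasNullExpr S (n * m) ⁅x ^ n, y⁆ := by
  induction n with
  | zero => simpa using one
  | succ n ih =>
    rw [add_one_mul]
    refine ((ih.conj x).mul h).of_eq ?_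
    simp only [commutatorElement_def]
    group

theorem pow_mul_pow_div_mul_pow (h : HasNullExpr S m ⁅v, u⁻¹⁆) (n : ℕ) :
    HasNullExpr S (m * ∑ k ∈ Finset.range n, k) (u ^ n * v ^ n / (u * v) ^ n) := by
  induction n with
  | zero => simpa using one
  | succ n ih =>
    rw [Finset.sum_range_succ, mul_add, add_comm, mul_comm m n]
    refine (((h.commutatorElement_pow_left n).conj (u ^ (n + 1))).mul ih).of_eq ?_
    rw [pow_succ (u * v) n]
    generalize (u * v) ^ n = q
    simp only [commutatorElement_def, div_eq_mul_inv]
    group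

end HasNullExpr

theorem area_triangle_power_general {A : Type*} (R : Set (FreeGroup A))
    (e f g : A)
    (h1 : FreeGroup.of e * FreeGroup.of f * FreeGroup.of g ∈ R)
    (h2 : (FreeGroup.of e)⁻¹ * (FreeGroup.of f)⁻¹ * (FreeGroup.of g)⁻¹ ∈ R)
    (n : ℕ) :
    ∃ m ≤ 3 * n ^ 2,
      HasNullExpr R m ((FreeGroup.of e) ^ n * (FreeGroup.of f) ^ n * (FreeGroup.of g) ^ n) := by
  set E := FreeGroup.of e
  set F := FreeGroup.of f
  set G := FreeGroup.of g
  have hcomm : HasNullExpr R 2 ⁅F, E⁻¹⁆ :=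
    (((HasNullExpr.of_mem h1).conj E⁻¹).mul ((HasNullExpr.of_mem h2).conj (E⁻¹ * F * E))).of_eq
      (by rw [commutatorElement_def]; group)
  have hshuffle := hcomm.pow_mul_pow_div_mul_pow n
  have hcancel := (HasNullExpr.of_mem h1).pow_mul_pow (u := E * F) n
  refine ⟨_, ?_, (hshuffle.mul hcancel).of_eq (by rw [← mul_assoc, div_mul_cancel])⟩
  have hsum := Finset.sum_range_id_mul_two n
  have : n * (n - 1) ≤ n * n := Nat.mul_le_mul_left _ (Nat.sub_le _ _)
  nlinarith

theorem area_triangle_power {A : Type*} [Fintype A] (R : Set (FreeGroup A))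
    (e f g : A)
    (h1 : FreeGroup.of e * FreeGroup.of f * FreeGroup.of g ∈ R)
    (h2 : (FreeGroup.of e)⁻¹ * (FreeGroup.of f)⁻¹ * (FreeGroup.of g)⁻¹ ∈ R)
    (n : ℕ) :
    ∃ m ≤ 3 * n ^ 2,
      HasNullExpr R m ((FreeGroup.of e) ^ n * (FreeGroup.of f) ^ n * (FreeGroup.of g) ^ n) :=
  area_triangle_power_general R e f g h1 h2 n
end

section
/- Let A be a finite set and suppose w ∈ F(A) can be written as w = ∏_{i=1}^m xᵢ zᵢ xᵢ⁻¹ in F(A ∪ {t}) with xᵢ ∈ F(A ∪ {t}) and zᵢ ∈ F(A ∪ {t}) each of t-exponent-sum zero. Let ψ : ker φ → F(A) be any group homomorphism defined on the kernel of the t-exponent-sum map φ that restricts to the identity on F(A) ⊆ ker φ. Then w = ∏_{i=1}^m ψ(x̄ᵢ) ψ(z̄ᵢ) ψ(x̄ᵢ)⁻¹ in F(A), where x̄ᵢ = xᵢ t^{-φ(xᵢ)} and z̄ᵢ = t^{φ(xᵢ)} zᵢ t^{-φ(xᵢ)}. -/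
/-- The inclusion `F(A) → F(A ∪ {t})`. -/
noncomputable def incl (A : Type*) : FreeGroup A →* FreeGroup (A ⊕ Unit) :=
  FreeGroup.map Sum.inl

theorem push_expression_to_kernel {A : Type*} [Fintype A]
    (ψ : (expSum A).ker →* FreeGroup A)
    (hψ : ∀ (v : FreeGroup A) (h : incl A v ∈ (expSum A).ker), ψ ⟨incl A v, h⟩ = v)
    (m : ℕ) (x z : Fin m → FreeGroup (A ⊕ Unit))
    (hz : ∀ i, expSum A (z i) = 1)
    (w : FreeGroup A)
    (hw : incl A w = (List.ofFn (fun i => x i * z i * (x i)⁻¹)).prod)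
    (xb zb : Fin m → (expSum A).ker)
    (hxb : ∀ i, (xb i : FreeGroup (A ⊕ Unit)) =
      x i * tGen A ^ (-(expSum A (x i)).toAdd))
    (hzb : ∀ i, (zb i : FreeGroup (A ⊕ Unit)) =
      tGen A ^ ((expSum A (x i)).toAdd) * z i * tGen A ^ (-(expSum A (x i)).toAdd)) :
    w = (List.ofFn (fun i => ψ (xb i) * ψ (zb i) * (ψ (xb i))⁻¹)).prod := by
  have key : ∀ i, ((xb i * zb i * (xb i)⁻¹ : (expSum A).ker) : FreeGroup (A ⊕ Unit))
      = x i * z i * (x i)⁻¹ := by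
    intro i
    push_cast
    rw [hxb, hzb]
    group
  set P : (expSum A).ker := (List.ofFn (fun i => xb i * zb i * (xb i)⁻¹)).prod with hP
  have hPcoe : (P : FreeGroup (A ⊕ Unit)) = incl A w := by
    rw [hw, hP]
    push_cast
    rw [List.map_ofFn]
    simp only [Function.comp_def, key]
  have hmem : incl A w ∈ (expSum A).ker := hPcoe ▸ P.2
  have hPeq : P = ⟨incl A w, hmem⟩ := Subtype.ext hPcoe
  have : ψ P = w := by rw [hPeq, hψ]
  rw [← this, hP, ψ.map_list_prod]
  simp [Function.comp_def]
end
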